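/- For an arbitrary SLP 𝒯 = {X_1 → expr_1, …, X_n → expr_n} and integer q ≥ 2, the number of edges in the right q-gram neighbor graph G_q of 𝒯 is at most 2n. -/

import Mathlib

/-- A straight line program over alphabet `α`: variables are `Fin n` (variable
`X_i` of the paper corresponds to index `i-1`), each with either a terminal
rule (a single character) or a nonterminal rule `X_i → X_j X_k` with `j,k < i`. -/
structure SLP (α : Type) where
  n : ℕ
  npos : 0 < n
  rule : Fin n → α ⊕ (Fin n × Fin n)
  wf : ∀ i jk, rule i = Sum.inr jk → jk.1 < i ∧ jk.2 < i

namespace SLP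

variable {α : Type}

/-- the string `val(X_i)` derived by a variable -/
def val (S : SLP α) (i : Fin S.n) : List α :=
  match h : S.rule i with
  | Sum.inl a => [a]
  | Sum.inr jk =>
    have _h1 := (S.wf i jk h).1
    have _h2 := (S.wf i jk h).2
    S.val jk.1 ++ S.val jk.2
termination_by i.val

/-- the last variable `X_n` -/
def lastIdx (S : SLP α) : Fin S.n := ⟨S.n - 1, Nat.sub_lt S.npos Nat.one_pos⟩

/-- the string `T` represented by the SLP -/
def text (S : SLP α) : List α := S.val S.lastIdx

/-- `T([i:j])`: the (1-based, inclusive) substring of a string -/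
def substr (T : List α) (i j : ℕ) : List α := (T.drop (i - 1)).take (j + 1 - i)

/-- `pre(T,q)` -/
def spre (T : List α) (q : ℕ) : List α := T.take q

/-- `suf(T,q)` -/
def ssuf (T : List α) (q : ℕ) : List α := T.drop (T.length - q)

/-- `pre([b:e],q)` for intervals of positions -/
def ipre (b e q : ℕ) : Finset ℕ := Finset.Icc b (min (b + q - 1) e)

/-- `suf([b:e],q)` for intervals of positions -/
def isuf (b e q : ℕ) : Finset ℕ := Finset.Icc (max b (e + 1 - q)) e

/-- `Occ(T,P)`: the set of (1-based) occurrences of `P` in `T` -/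
def Occ [DecidableEq α] (T P : List α) : Finset ℕ :=
  (Finset.Icc 1 T.length).filter fun k => substr T k (k + P.length - 1) = P

/-- the multiset of labels of the nodes of the derivation tree rooted at
a node labeled `X_i` -/
def occsFrom (S : SLP α) (i : Fin S.n) : Multiset (Fin S.n) :=
  match h : S.rule i with
  | Sum.inl _ => {i}
  | Sum.inr jk =>
    have _h1 := (S.wf i jk h).1
    have _h2 := (S.wf i jk h).2
    i ::ₘ (S.occsFrom jk.1 + S.occsFrom jk.2)
termination_by i.val

/-- `vOcc(X_i)`: the number of nodes of the derivation tree labeled `X_i` -/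
def vOcc (S : SLP α) (i : Fin S.n) : ℕ := (S.occsFrom S.lastIdx).count i

/-- the string `t_i = suf(val(X_{ℓ(i)}),q-1) pre(val(X_{r(i)}),q-1)`
(and `[]` for a terminal rule) -/
def tstr (S : SLP α) (q : ℕ) (i : Fin S.n) : List α :=
  match S.rule i with
  | Sum.inl _ => []
  | Sum.inr jk => ssuf (S.val jk.1) (q - 1) ++ spre (S.val jk.2) (q - 1)

/-- `label(X_i) = t_i([q:|t_i|])` -/
def labelStr (S : SLP α) (q : ℕ) (i : Fin S.n) : List α := (S.tstr q i).drop (q - 1)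

/-- Nodes of the derivation tree are represented by the path from the root
(`false` = go to left child, `true` = go to right child).  `descend i p`
returns the label of the node reached from a node labeled `X_i` by path `p`. -/
def descend (S : SLP α) : Fin S.n → List Bool → Option (Fin S.n)
  | i, [] => some i
  | i, b :: p =>
    match S.rule i with
    | Sum.inl _ => none
    | Sum.inr jk => S.descend (if b then jk.2 else jk.1) p

/-- the label of the node of the derivation tree reached by path `p` from the root -/
def nodeVar (S : SLP α) (p : List Bool) : Option (Fin S.n) := S.descend S.lastIdx p

/-- `p` is a valid node of the derivation tree -/
def IsNode (S : SLP α) (p : List Bool) : Prop := (S.nodeVar p).isSome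

/-- the 0-based offset in `val(X_i)` of the part derived below path `p` -/
def offsetFrom (S : SLP α) : Fin S.n → List Bool → ℕ
  | _, [] => 0
  | i, b :: p =>
    match S.rule i with
    | Sum.inl _ => 0
    | Sum.inr jk =>
      if b then (S.val jk.1).length + S.offsetFrom jk.2 p
      else S.offsetFrom jk.1 p

/-- the 0-based offset in `T` of the interval derived by node `p` -/
def offset (S : SLP α) (p : List Bool) : ℕ := S.offsetFrom S.lastIdx p

/-- `itv(v)`: the (1-based) interval of positions of `T` derived by node `p` -/
def itv (S : SLP α) (p : List Bool) : Finset ℕ :=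
  match S.nodeVar p with
  | some i => Finset.Icc (S.offset p + 1) (S.offset p + (S.val i).length)
  | none => ∅

/-- `p = ξ(b,e)`: `p` is the deepest node whose interval contains `[b:e]`,
i.e. `itv(p) ⊇ [b:e]` and no proper descendant of `p` satisfies this. -/
def Stabs (S : SLP α) (p : List Bool) (b e : ℕ) : Prop :=
  S.IsNode p ∧ Finset.Icc b e ⊆ S.itv p ∧
  ∀ p' : List Bool, p <+: p' → p ≠ p' → S.IsNode p' → ¬ Finset.Icc b e ⊆ S.itv p'

/-- `X_j` is a right `q`-gram neighbor of `X_i` -/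
def RightNbr (S : SLP α) (q : ℕ) (i j : Fin S.n) : Prop :=
  i ≠ j ∧ ∃ u p p', 1 ≤ u ∧ u + q ≤ S.text.length ∧
    S.Stabs p u (u + q - 1) ∧ S.nodeVar p = some i ∧
    S.Stabs p' (u + 1) (u + q) ∧ S.nodeVar p' = some j

/-- `lm_q(X_i)`: the last variable of length `≥ q` on the sequence `i, ℓ(i), ℓ(ℓ(i)), …`
(meaningful when `|val(X_i)| ≥ q`) -/
def lm (S : SLP α) (q : ℕ) (i : Fin S.n) : Fin S.n :=
  match h : S.rule i with
  | Sum.inl _ => i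
  | Sum.inr jk =>
    have := (S.wf i jk h).1
    if (S.val jk.1).length < q then i else S.lm q jk.1
termination_by i.val

/-- `rm_q(X_i)`: the last variable of length `≥ q` on the sequence `i, r(i), r(r(i)), …` -/
def rm (S : SLP α) (q : ℕ) (i : Fin S.n) : Fin S.n :=
  match h : S.rule i with
  | Sum.inl _ => i
  | Sum.inr jk =>
    have := (S.wf i jk h).2
    if (S.val jk.2).length < q then i else S.rm q jk.2
termination_by i.val

/-- `lm_q` returning `null` (`none`) when `|val(X_i)| < q` -/
def lmOpt (S : SLP α) (q : ℕ) (i : Fin S.n) : Option (Fin S.n) :=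
  if (S.val i).length < q then none else some (S.lm q i)

/-- `rm_q` returning `null` (`none`) when `|val(X_i)| < q` -/
def rmOpt (S : SLP α) (q : ℕ) (i : Fin S.n) : Option (Fin S.n) :=
  if (S.val i).length < q then none else some (S.rm q i)

/-- `LSpine S i k`: `k` occurs in the sequence `i, ℓ(i), ℓ(ℓ(i)), …`
(the leftmost path of the derivation subtree rooted at a node labeled `X_i`) -/
inductive LSpine (S : SLP α) : Fin S.n → Fin S.n → Prop
  | refl (i : Fin S.n) : LSpine S i i
  | step {i k : Fin S.n} {jk : Fin S.n × Fin S.n} :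
      S.rule i = Sum.inr jk → LSpine S jk.1 k → LSpine S i k

end SLP

/-!
Let `ξ(u, u+q-1)` and `ξ(u+1, u+q)` be labeled `X_i` and `X_j`. Both nodes cover position `u+1`
because `q ≥ 2`, so one is a proper ancestor of the other. If the node of `X_i` is the ancestor,
the `q`-gram `[u+1 : u+q]` must start exactly at its right child (otherwise `[u : u+q-1]` would fit
in a child), and following left children while the length stays `≥ q` gives
`X_j = lm_q(X_{r(i)})`. Symmetrically `X_i = rm_q(X_{ℓ(j)})` in the other case. So every edge is
`(X_k, lm_q(X_{r(k)}))` or `(rm_q(X_{ℓ(k)}), X_k)` for some variable `X_k`, and there are at most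
`2n` of them.
-/

theorem List.prefix_or_prefix_or_exists_fork {β : Type*} :
    ∀ p p' : List β, p <+: p' ∨ p' <+: p ∨
      ∃ r s s' : List β, ∃ b b', b ≠ b' ∧ p = r ++ b :: s ∧ p' = r ++ b' :: s'
  | [], _ => .inl List.nil_prefix
  | _ :: _, [] => .inr (.inl List.nil_prefix)
  | a :: p, a' :: p' => by
    by_cases hab : a = a'
    · subst hab
      rcases prefix_or_prefix_or_exists_fork p p' with h | h | ⟨r, s, s', b, b', hbb', rfl, rfl⟩
      · exact .inl (List.cons_prefix_cons.mpr ⟨rfl, h⟩)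
      · exact .inr (.inl (List.cons_prefix_cons.mpr ⟨rfl, h⟩))
      · exact .inr (.inr ⟨a :: r, s, s', b, b', hbb', rfl, rfl⟩)
    · exact .inr (.inr ⟨[], p, p', a, a', hab, rfl, rfl⟩)

namespace SLP

variable {α : Type} (S : SLP α)

theorem val_of_rule_inl {i : Fin S.n} {a : α} (h : S.rule i = .inl a) : S.val i = [a] := by
  rw [val]; split <;> simp_all

theorem val_of_rule_inr {i : Fin S.n} {jk : Fin S.n × Fin S.n} (h : S.rule i = .inr jk) :
    S.val i = S.val jk.1 ++ S.val jk.2 := by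
  rw [val]; split <;> simp_all

theorem length_val_of_rule_inr {i : Fin S.n} {jk : Fin S.n × Fin S.n} (h : S.rule i = .inr jk) :
    (S.val i).length = (S.val jk.1).length + (S.val jk.2).length := by
  simp [S.val_of_rule_inr h]

theorem length_val_pos (i : Fin S.n) : 0 < (S.val i).length := by
  rcases h : S.rule i with a | jk
  · simp [S.val_of_rule_inl h]
  · have := (S.wf i jk h).1
    have := length_val_pos jk.1
    rw [S.length_val_of_rule_inr h]
    omega
termination_by i.val

theorem lm_of_rule_inl (q : ℕ) {i : Fin S.n} {a : α} (h : S.rule i = .inl a) : S.lm q i = i := by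
  rw [lm]; split <;> simp_all

theorem lm_of_rule_inr (q : ℕ) {i : Fin S.n} {jk : Fin S.n × Fin S.n} (h : S.rule i = .inr jk) :
    S.lm q i = if (S.val jk.1).length < q then i else S.lm q jk.1 := by
  rw [lm]; split <;> simp_all

theorem rm_of_rule_inl (q : ℕ) {i : Fin S.n} {a : α} (h : S.rule i = .inl a) : S.rm q i = i := by
  rw [rm]; split <;> simp_all

theorem rm_of_rule_inr (q : ℕ) {i : Fin S.n} {jk : Fin S.n × Fin S.n} (h : S.rule i = .inr jk) :
    S.rm q i = if (S.val jk.2).length < q then i else S.rm q jk.2 := by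
  rw [rm]; split <;> simp_all

section Paths

variable {S}

theorem descend_append (i : Fin S.n) (p p' : List Bool) :
    S.descend i (p ++ p') = (S.descend i p).bind (S.descend · p') := by
  induction p generalizing i with
  | nil => rfl
  | cons b p ih =>
    simp only [List.cons_append, descend]
    split
    · rfl
    · exact ih _

theorem nodeVar_append (p p' : List Bool) :
    S.nodeVar (p ++ p') = (S.nodeVar p).bind (S.descend · p') :=
  descend_append _ p p'

theorem nodeVar_append_false {p : List Bool} {i : Fin S.n} {jk : Fin S.n × Fin S.n}
    (hp : S.nodeVar p = some i) (hr : S.rule i = .inr jk) :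
    S.nodeVar (p ++ [false]) = some jk.1 := by
  simp [nodeVar_append, hp, descend, hr]

theorem nodeVar_append_true {p : List Bool} {i : Fin S.n} {jk : Fin S.n × Fin S.n}
    (hp : S.nodeVar p = some i) (hr : S.rule i = .inr jk) :
    S.nodeVar (p ++ [true]) = some jk.2 := by
  simp [nodeVar_append, hp, descend, hr]

theorem nodeVar_append_cons_of_rule_inl {p s : List Bool} {c : Bool} {i : Fin S.n} {a : α}
    (hp : S.nodeVar p = some i) (hr : S.rule i = .inl a) :
    S.nodeVar (p ++ c :: s) = none := by
  simp [nodeVar_append, hp, descend, hr]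

theorem exists_rule_inr_of_nodeVar_append_cons {p s : List Bool} {c : Bool} {i j : Fin S.n}
    (hp : S.nodeVar p = some i) (hj : S.nodeVar (p ++ c :: s) = some j) :
    ∃ jk, S.rule i = .inr jk := by
  rcases hr : S.rule i with a | jk
  · simp [nodeVar_append_cons_of_rule_inl hp hr] at hj
  · exact ⟨jk, rfl⟩

theorem offsetFrom_append {i j : Fin S.n} {p : List Bool} (p' : List Bool)
    (h : S.descend i p = some j) :
    S.offsetFrom i (p ++ p') = S.offsetFrom i p + S.offsetFrom j p' := by
  induction p generalizing i with
  | nil => cases h; simp [offsetFrom]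
  | cons b p ih =>
    rcases hr : S.rule i with a | jk
    · simp [descend, hr] at h
    cases b <;> simp only [descend, hr, Bool.false_eq_true, if_true, if_false] at h <;>
      simp [offsetFrom, hr, ih h, Nat.add_assoc]

theorem offset_append_false {p : List Bool} {i : Fin S.n} {jk : Fin S.n × Fin S.n}
    (hp : S.nodeVar p = some i) (hr : S.rule i = .inr jk) :
    S.offset (p ++ [false]) = S.offset p := by
  simp [offset, offsetFrom_append _ hp, offsetFrom, hr]

theorem offset_append_true {p : List Bool} {i : Fin S.n} {jk : Fin S.n × Fin S.n}
    (hp : S.nodeVar p = some i) (hr : S.rule i = .inr jk) :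
    S.offset (p ++ [true]) = S.offset p + (S.val jk.1).length := by
  simp [offset, offsetFrom_append _ hp, offsetFrom, hr]

end Paths

section Intervals

variable {S}

theorem itv_of_nodeVar_eq_some {p : List Bool} {i : Fin S.n} (hp : S.nodeVar p = some i) :
    S.itv p = Finset.Icc (S.offset p + 1) (S.offset p + (S.val i).length) := by
  simp [itv, hp]

theorem itv_of_nodeVar_eq_none {p : List Bool} (hp : S.nodeVar p = none) : S.itv p = ∅ := by
  simp [itv, hp]

theorem itv_append_false {p : List Bool} {i : Fin S.n} {jk : Fin S.n × Fin S.n}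
    (hp : S.nodeVar p = some i) (hr : S.rule i = .inr jk) :
    S.itv (p ++ [false]) = Finset.Icc (S.offset p + 1) (S.offset p + (S.val jk.1).length) := by
  rw [itv_of_nodeVar_eq_some (nodeVar_append_false hp hr), offset_append_false hp hr]

theorem itv_append_true {p : List Bool} {i : Fin S.n} {jk : Fin S.n × Fin S.n}
    (hp : S.nodeVar p = some i) (hr : S.rule i = .inr jk) :
    S.itv (p ++ [true]) = Finset.Icc (S.offset p + (S.val jk.1).length + 1)
      (S.offset p + (S.val i).length) := by
  rw [itv_of_nodeVar_eq_some (nodeVar_append_true hp hr), offset_append_true hp hr,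
    S.length_val_of_rule_inr hr, Nat.add_assoc, Nat.add_assoc]

theorem itv_append_singleton_subset (p : List Bool) (b : Bool) : S.itv (p ++ [b]) ⊆ S.itv p := by
  rcases hp : S.nodeVar p with _ | i
  · simp [itv_of_nodeVar_eq_none, nodeVar_append, hp]
  rcases hr : S.rule i with a | jk
  · simp [itv_of_nodeVar_eq_none, nodeVar_append_cons_of_rule_inl hp hr]
  have := S.length_val_of_rule_inr hr
  have := S.length_val_pos jk.1
  rw [itv_of_nodeVar_eq_some hp]
  cases b
  · rw [itv_append_false hp hr]
    exact Finset.Icc_subset_Icc le_rfl (by omega)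
  · rw [itv_append_true hp hr]
    exact Finset.Icc_subset_Icc (by omega) le_rfl

theorem itv_append_subset (p s : List Bool) : S.itv (p ++ s) ⊆ S.itv p := by
  induction s generalizing p with
  | nil => simp
  | cons b s ih =>
    rw [List.append_cons]
    exact (ih _).trans (itv_append_singleton_subset p b)

theorem prefix_or_prefix_of_mem_itv {p p' : List Bool} {x : ℕ}
    (hx : x ∈ S.itv p) (hx' : x ∈ S.itv p') : p <+: p' ∨ p' <+: p := by
  rcases List.prefix_or_prefix_or_exists_fork p p' with h | h | ⟨r, s, s', b, b', hbb', rfl, rfl⟩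
  · exact .inl h
  · exact .inr h
  exfalso
  rw [List.append_cons] at hx hx'
  have hb := itv_append_subset _ s hx
  have hb' := itv_append_subset _ s' hx'
  rcases hr : S.nodeVar r with _ | i
  · simp [itv_of_nodeVar_eq_none, nodeVar_append, hr] at hb
  rcases hrule : S.rule i with a | jk
  · simp [itv_of_nodeVar_eq_none, nodeVar_append_cons_of_rule_inl hr hrule] at hb
  cases b <;> cases b' <;> simp only [ne_eq, not_true_eq_false] at hbb' <;>
    simp only [itv_append_false hr hrule, itv_append_true hr hrule, Finset.mem_Icc] at hb hb' <;>
    omega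

theorem isNode_of_mem_itv {p : List Bool} {x : ℕ} (hx : x ∈ S.itv p) : S.IsNode p := by
  rcases hp : S.nodeVar p with _ | i
  · simp [itv_of_nodeVar_eq_none hp] at hx
  · simp [IsNode, hp]

theorem Stabs.not_subset_itv_append_singleton {p : List Bool} {b e : ℕ} (h : S.Stabs p b e)
    (hbe : b ≤ e) (c : Bool) : ¬ Finset.Icc b e ⊆ S.itv (p ++ [c]) := fun hsub =>
  h.2.2 _ ⟨[c], rfl⟩ (by simp) (isNode_of_mem_itv (hsub (Finset.left_mem_Icc.mpr hbe))) hsub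

end Intervals

section Deepest

variable {S} {q : ℕ}

/-- Below a node `C` labeled `X_k`, the deepest node covering the prefix `q`-gram of `val(X_k)`
is labeled `lm_q(X_k)`. -/
theorem eq_lm_of_deepest (hq : 0 < q) {u : ℕ} (s : List Bool) {C : List Bool} {k j : Fin S.n}
    (hC : S.nodeVar C = some k) (ho : S.offset C = u) (hj : S.nodeVar (C ++ s) = some j)
    (hsub : Finset.Icc (u + 1) (u + q) ⊆ S.itv (C ++ s))
    (hleft : ¬ Finset.Icc (u + 1) (u + q) ⊆ S.itv (C ++ s ++ [false])) :
    j = S.lm q k := by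
  induction s generalizing C k with
  | nil =>
    obtain rfl : j = k := by simpa [hC] using hj.symm
    rcases hr : S.rule j with a | jk
    · exact (S.lm_of_rule_inl q hr).symm
    rw [S.lm_of_rule_inr q hr]
    split_ifs with hlen
    · rfl
    rw [List.append_nil, itv_append_false hC hr, ho] at hleft
    exact absurd (Finset.Icc_subset_Icc le_rfl (by omega)) hleft
  | cons c s ih =>
    obtain ⟨jk, hr⟩ := exists_rule_inr_of_nodeVar_append_cons hC hj
    rw [List.append_cons C] at hj hsub hleft
    have hmem := itv_append_subset _ s (hsub (Finset.mem_Icc.mpr ⟨by omega, le_rfl⟩))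
    have := S.length_val_pos jk.1
    cases c
    · rw [itv_append_false hC hr, ho, Finset.mem_Icc] at hmem
      rw [S.lm_of_rule_inr q hr, if_neg (by omega)]
      exact ih (nodeVar_append_false hC hr) (by rw [offset_append_false hC hr, ho]) hj hsub hleft
    · have hmem := itv_append_subset _ s (hsub (Finset.mem_Icc.mpr ⟨le_rfl, by omega⟩))
      rw [itv_append_true hC hr, ho, Finset.mem_Icc] at hmem
      omega

/-- Below a node `C` labeled `X_k`, the deepest node covering the suffix `q`-gram of `val(X_k)`
is labeled `rm_q(X_k)`. -/
theorem eq_rm_of_deepest (hq : 0 < q) {u : ℕ} (s : List Bool) {C : List Bool} {k j : Fin S.n}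
    (hC : S.nodeVar C = some k) (ho : S.offset C + (S.val k).length = u + q - 1)
    (hj : S.nodeVar (C ++ s) = some j)
    (hsub : Finset.Icc u (u + q - 1) ⊆ S.itv (C ++ s))
    (hright : ¬ Finset.Icc u (u + q - 1) ⊆ S.itv (C ++ s ++ [true])) :
    j = S.rm q k := by
  induction s generalizing C k with
  | nil =>
    obtain rfl : j = k := by simpa [hC] using hj.symm
    rcases hr : S.rule j with a | jk
    · exact (S.rm_of_rule_inl q hr).symm
    rw [S.rm_of_rule_inr q hr]
    split_ifs with hlen
    · rfl
    have := S.length_val_of_rule_inr hr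
    rw [List.append_nil, itv_append_true hC hr] at hright
    exact absurd (Finset.Icc_subset_Icc (by omega) (by omega)) hright
  | cons c s ih =>
    obtain ⟨jk, hr⟩ := exists_rule_inr_of_nodeVar_append_cons hC hj
    rw [List.append_cons C] at hj hsub hright
    have := S.length_val_of_rule_inr hr
    have := S.length_val_pos jk.2
    cases c
    · have hmem := itv_append_subset _ s (hsub (Finset.mem_Icc.mpr ⟨by omega, le_rfl⟩))
      rw [itv_append_false hC hr, Finset.mem_Icc] at hmem
      omega
    · have hmem := itv_append_subset _ s (hsub (Finset.mem_Icc.mpr ⟨le_rfl, by omega⟩))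
      rw [itv_append_true hC hr, Finset.mem_Icc] at hmem
      rw [S.rm_of_rule_inr q hr, if_neg (by omega)]
      exact ih (nodeVar_append_true hC hr) (by rw [offset_append_true hC hr]; omega) hj hsub hright

end Deepest

section Edges

/-- The edge `(X_k, lm_q(X_{r(k)}))`; the value at a terminal variable is irrelevant. -/
def lmEdge (q : ℕ) (k : Fin S.n) : Fin S.n × Fin S.n :=
  match S.rule k with
  | .inl _ => (k, k)
  | .inr jk => (k, S.lm q jk.2)

/-- The edge `(rm_q(X_{ℓ(k)}), X_k)`; the value at a terminal variable is irrelevant. -/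
def rmEdge (q : ℕ) (k : Fin S.n) : Fin S.n × Fin S.n :=
  match S.rule k with
  | .inl _ => (k, k)
  | .inr jk => (S.rm q jk.1, k)

variable {S} {q u : ℕ} {p p' : List Bool} {i j : Fin S.n}

theorem lmEdge_of_rule_inr {k : Fin S.n} {jk : Fin S.n × Fin S.n} (h : S.rule k = .inr jk) :
    S.lmEdge q k = (k, S.lm q jk.2) := by
  simp [lmEdge, h]

theorem rmEdge_of_rule_inr {k : Fin S.n} {jk : Fin S.n × Fin S.n} (h : S.rule k = .inr jk) :
    S.rmEdge q k = (S.rm q jk.1, k) := by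
  simp [rmEdge, h]

theorem mem_range_lmEdge_of_prefix (hq : 0 < q)
    (hp : S.Stabs p u (u + q - 1)) (hi : S.nodeVar p = some i)
    (hp' : S.Stabs p' (u + 1) (u + q)) (hj : S.nodeVar p' = some j)
    (hpp' : p <+: p') (hne : p ≠ p') : (i, j) ∈ Set.range (S.lmEdge q) := by
  obtain ⟨_ | ⟨c, s⟩, rfl⟩ := hpp'
  · simp at hne
  obtain ⟨jk, hr⟩ := exists_rule_inr_of_nodeVar_append_cons hi hj
  refine ⟨i, ?_⟩
  rw [lmEdge_of_rule_inr hr]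
  rw [List.append_cons] at hp' hj
  have hsub := hp'.2.1.trans (itv_append_subset _ s)
  have hnot := hp.not_subset_itv_append_singleton (by omega) c
  have hu := hp.2.1 (Finset.left_mem_Icc.mpr (by omega))
  rw [itv_of_nodeVar_eq_some hi, Finset.mem_Icc] at hu
  have := S.length_val_of_rule_inr hr
  cases c
  · rw [itv_append_false hi hr, Finset.Icc_subset_Icc_iff (by omega)] at hsub hnot
    omega
  · rw [itv_append_true hi hr, Finset.Icc_subset_Icc_iff (by omega)] at hsub hnot
    have ho : S.offset (p ++ [true]) = u := by rw [offset_append_true hi hr]; omega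
    rw [eq_lm_of_deepest hq s (nodeVar_append_true hi hr) ho hj hp'.2.1
      (hp'.not_subset_itv_append_singleton (by omega) false)]

theorem mem_range_rmEdge_of_prefix (hq : 0 < q)
    (hp : S.Stabs p u (u + q - 1)) (hi : S.nodeVar p = some i)
    (hp' : S.Stabs p' (u + 1) (u + q)) (hj : S.nodeVar p' = some j)
    (hpp' : p' <+: p) (hne : p' ≠ p) : (i, j) ∈ Set.range (S.rmEdge q) := by
  obtain ⟨_ | ⟨c, s⟩, rfl⟩ := hpp'
  · simp at hne
  obtain ⟨jk, hr⟩ := exists_rule_inr_of_nodeVar_append_cons hj hi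
  refine ⟨j, ?_⟩
  rw [rmEdge_of_rule_inr hr]
  rw [List.append_cons] at hp hi
  have hsub := hp.2.1.trans (itv_append_subset _ s)
  have hnot := hp'.not_subset_itv_append_singleton (by omega) c
  have hu := hp'.2.1 (Finset.right_mem_Icc.mpr (by omega))
  rw [itv_of_nodeVar_eq_some hj, Finset.mem_Icc] at hu
  have := S.length_val_of_rule_inr hr
  cases c
  · rw [itv_append_false hj hr, Finset.Icc_subset_Icc_iff (by omega)] at hsub hnot
    have ho : S.offset (p' ++ [false]) + (S.val jk.1).length = u + q - 1 := by
      rw [offset_append_false hj hr]; omega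
    rw [eq_rm_of_deepest hq s (nodeVar_append_false hj hr) ho hi hp.2.1
      (hp.not_subset_itv_append_singleton (by omega) true)]
  · rw [itv_append_true hj hr, Finset.Icc_subset_Icc_iff (by omega)] at hsub hnot
    omega

theorem mem_range_lmEdge_union_rmEdge (hq : 2 ≤ q) (h : S.RightNbr q i j) :
    (i, j) ∈ Set.range (S.lmEdge q) ∪ Set.range (S.rmEdge q) := by
  obtain ⟨hij, u, p, p', -, -, hp, hi, hp', hj⟩ := h
  have hne : p ≠ p' := by
    rintro rfl
    exact hij (Option.some_inj.mp (hi.symm.trans hj))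
  have hx := hp.2.1 (Finset.mem_Icc.mpr ⟨by omega, by omega⟩ : u + 1 ∈ Finset.Icc u (u + q - 1))
  have hx' := hp'.2.1 (Finset.left_mem_Icc.mpr (by omega))
  rcases prefix_or_prefix_of_mem_itv hx hx' with h | h
  · exact .inl (mem_range_lmEdge_of_prefix (by omega) hp hi hp' hj h hne)
  · exact .inr (mem_range_rmEdge_of_prefix (by omega) hp hi hp' hj h hne.symm)

end Edges

end SLP

/-- the right `q`-gram neighbor graph of an SLP of size `n`
has at most `2n` edges. -/
theorem stmt5 {α : Type} (q : ℕ) (hq : 2 ≤ q) (S : SLP α) :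
    Set.ncard {ij : Fin S.n × Fin S.n | S.RightNbr q ij.1 ij.2} ≤ 2 * S.n := by
  calc Set.ncard {ij : Fin S.n × Fin S.n | S.RightNbr q ij.1 ij.2}
      ≤ (Set.range (S.lmEdge q) ∪ Set.range (S.rmEdge q)).ncard :=
        Set.ncard_le_ncard (fun _ h => SLP.mem_range_lmEdge_union_rmEdge hq h) (Set.toFinite _)
    _ ≤ (Set.range (S.lmEdge q)).ncard + (Set.range (S.rmEdge q)).ncard := Set.ncard_union_le _ _
    _ ≤ S.n + S.n := by
        simpa only [Nat.card_coe_set_eq, Nat.card_fin] using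
          add_le_add (Finite.card_range_le (S.lmEdge q)) (Finite.card_range_le (S.rmEdge q))
    _ = 2 * S.n := (two_mul _).symm
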